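/- If a symmetric n×n real matrix A has n distinct eigenvalues with orthonormal eigenvectors v_1,…,v_n each satisfying v_iᵀ·1 ≠ 0, then the only permutation matrix Π with A = ΠᵀAΠ is the identity (i.e., the graph with adjacency matrix A is asymmetric). -/

import Mathlib

/-! Since `Π` is orthogonal, `A = Πᵀ A Π` says that `Π` commutes with `A`. In the orthonormal
eigenbasis `V` (rows `v i`) the matrix `B = V Π Vᵀ` then commutes with the diagonal matrix of the
distinct eigenvalues, so it is diagonal: `Π v_i = b_i v_i`. Column sums one give `1ᵀ Π = 1ᵀ`, hence
`b_i (v_i ⬝ 1) = v_i ⬝ 1`, and friendliness forces `b_i = 1`. So `B = 1` and `Π = Vᵀ B V = 1`. -/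

namespace Matrix

variable {ι : Type*} [Fintype ι] [DecidableEq ι]

section ZeroOne

variable {R : Type*} [Semiring R] [PartialOrder R] [IsStrictOrderedRing R] {P : Matrix ι ι R}

theorem entry_mul_entry_of_zero_one (h01 : ∀ i j, P i j = 0 ∨ P i j = 1)
    (hrow : ∀ i, ∑ j, P i j = 1) (i j k : ι) :
    P i j * P i k = if j = k then P i j else 0 := by
  split_ifs with hjk
  · subst hjk
    rcases h01 i j with h | h <;> simp [h]
  rcases h01 i j with hj | hj
  · simp [hj]
  rcases h01 i k with hk | hk
  · simp [hk]
  have hpair : P i j + P i k ≤ ∑ l, P i l := by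
    rw [← Finset.sum_pair hjk]
    exact Finset.sum_le_univ_sum_of_nonneg fun l => by rcases h01 i l with h | h <;> simp [h]
  rw [hj, hk, hrow] at hpair
  exact ((add_le_iff_nonpos_left.mp hpair).not_gt zero_lt_one).elim

theorem transpose_mul_self_eq_one_of_zero_one (h01 : ∀ i j, P i j = 0 ∨ P i j = 1)
    (hrow : ∀ i, ∑ j, P i j = 1) (hcol : ∀ j, ∑ i, P i j = 1) : Pᵀ * P = 1 := by
  ext j k
  simp only [mul_apply, transpose_apply, entry_mul_entry_of_zero_one h01 hrow, one_apply]
  split_ifs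
  · exact hcol j
  · exact Finset.sum_const_zero

end ZeroOne

variable {K : Type*} [Field K]

theorem of_mul_transpose_self_eq_one {v : ι → ι → K}
    (horth : ∀ i j, v i ⬝ᵥ v j = if i = j then 1 else 0) : of v * (of v)ᵀ = 1 := by
  ext i j
  exact horth i j

theorem mul_transpose_of_eq_transpose_of_mul_diagonal {A : Matrix ι ι K} {v : ι → ι → K}
    {d : ι → K} (heig : ∀ i, A *ᵥ v i = d i • v i) : A * (of v)ᵀ = (of v)ᵀ * diagonal d := by
  ext k i
  rw [mul_diagonal]
  simpa [mul_comm, mul_apply, mulVec, dotProduct] using congrFun (heig i) k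

theorem eq_diagonal_of_commute_diagonal {B : Matrix ι ι K} {d : ι → K}
    (hd : Function.Injective d) (h : Commute B (diagonal d)) :
    B = diagonal fun i => B i i := by
  ext i j
  by_cases hij : i = j
  · subst hij; simp
  rw [diagonal_apply_ne _ hij]
  by_contra hB
  have hij' := congrFun (congrFun h.eq i) j
  rw [mul_diagonal, diagonal_mul, mul_comm] at hij'
  exact hij (hd (mul_right_cancel₀ hB hij').symm)

theorem eq_one_of_vecMul_diagonal_eq {u d : ι → K} (hu : ∀ i, u i ≠ 0)
    (h : u ᵥ* diagonal d = u) : d = 1 := by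
  funext i
  have := congrFun h i
  rw [vecMul_diagonal] at this
  exact (mul_eq_left₀ (hu i)).mp this

end Matrix

open Matrix

theorem stmt_12_general (n : ℕ) (A : Matrix (Fin n) (Fin n) ℝ)
    (lam : Fin n → ℝ) (v : Fin n → (Fin n → ℝ))
    (heig : ∀ i, A.mulVec (v i) = lam i • v i)
    (hdistinct : Function.Injective lam)
    (horth : ∀ i j, dotProduct (v i) (v j) = if i = j then 1 else 0)
    (hfriendly : ∀ i, dotProduct (v i) (fun _ => (1 : ℝ)) ≠ 0)
    (Pi : Matrix (Fin n) (Fin n) ℝ)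
    (hPi01 : ∀ i j, Pi i j = 0 ∨ Pi i j = 1)
    (hrow : ∀ i, ∑ j, Pi i j = 1)
    (hcol : ∀ j, ∑ i, Pi i j = 1)
    (hauto : A = Piᵀ * A * Pi) :
    Pi = 1 := by
  set V := of v
  have hVVt : V * Vᵀ = 1 := of_mul_transpose_self_eq_one horth
  have hVtV : Vᵀ * V = 1 := mul_eq_one_comm.mp hVVt
  have hAV : A * Vᵀ = Vᵀ * diagonal lam := mul_transpose_of_eq_transpose_of_mul_diagonal heig
  have hVA : V * A = diagonal lam * V := by
    calc V * A = V * A * Vᵀ * V := by rw [mul_assoc _ Vᵀ, hVtV, mul_one]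
      _ = diagonal lam * V := by rw [mul_assoc V A, hAV, ← mul_assoc, hVVt, one_mul]
  have hcomm : Pi * A = A * Pi := by
    calc Pi * A = Pi * (Piᵀ * A * Pi) := congrArg (Pi * ·) hauto
      _ = A * Pi := by
        rw [← mul_assoc, ← mul_assoc, mul_eq_one_comm.mp
          (transpose_mul_self_eq_one_of_zero_one hPi01 hrow hcol), one_mul]
  obtain ⟨b, hB⟩ : ∃ b, V * Pi * Vᵀ = diagonal b := by
    refine ⟨_, eq_diagonal_of_commute_diagonal hdistinct ?_⟩
    calc V * Pi * Vᵀ * diagonal lam = V * (Pi * A) * Vᵀ := by simp only [mul_assoc, ← hAV]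
      _ = diagonal lam * (V * Pi * Vᵀ) := by
          rw [hcomm, ← mul_assoc V A, hVA]
          simp only [mul_assoc]
  have hb : b = 1 := by
    refine eq_one_of_vecMul_diagonal_eq (u := V *ᵥ 1) hfriendly ?_
    have h1Pi : 1 ᵥ* Pi = 1 := funext fun j => by simp [vecMul, dotProduct, hcol]
    rw [← hB, ← vecMul_transpose, vecMul_vecMul, ← mul_assoc, ← mul_assoc, hVtV, one_mul,
      ← vecMul_vecMul, h1Pi]
  calc Pi = Vᵀ * (V * Pi * Vᵀ) * V := by
        rw [← mul_assoc, ← mul_assoc, hVtV, one_mul, mul_assoc, hVtV, mul_one]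
    _ = 1 := by rw [hB, hb, diagonal_one', mul_one, hVtV]

theorem stmt_12 (n : ℕ) (A : Matrix (Fin n) (Fin n) ℝ) (hA : Aᵀ = A)
    (lam : Fin n → ℝ) (v : Fin n → (Fin n → ℝ))
    (heig : ∀ i, A.mulVec (v i) = lam i • v i)
    (hdistinct : Function.Injective lam)
    (horth : ∀ i j, dotProduct (v i) (v j) = if i = j then 1 else 0)
    (hfriendly : ∀ i, dotProduct (v i) (fun _ => (1 : ℝ)) ≠ 0)
    (Pi : Matrix (Fin n) (Fin n) ℝ)
    (hPi01 : ∀ i j, Pi i j = 0 ∨ Pi i j = 1)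
    (hrow : ∀ i, ∑ j, Pi i j = 1)
    (hcol : ∀ j, ∑ i, Pi i j = 1)
    (hauto : A = Piᵀ * A * Pi) :
    Pi = 1 :=
  stmt_12_general n A lam v heig hdistinct horth hfriendly Pi hPi01 hrow hcol hauto
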